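/- arXiv:1701.07779 — 6 statements merged into one kernel-verified Lean document; each statement's English description precedes it below -/
import Mathlib

section
/- For 0 < α < 1, the function g(x) = (1-α)x / (1 + α² - 2α(2x² - 1)) satisfies 1/(α-1) = g(-1) ≤ g(x) ≤ g(1) = 1/(1-α) for all x ∈ [-1,1]. -/
theorem g_bounds (α : ℝ) (hα0 : 0 < α) (hα1 : α < 1)
    (g : ℝ → ℝ)
    (hg : ∀ x, g x = (1 - α) * x / (1 + α ^ 2 - 2 * α * (2 * x ^ 2 - 1))) :
    g (-1) = 1 / (α - 1) ∧ g 1 = 1 / (1 - α) ∧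
    ∀ x ∈ Set.Icc (-1 : ℝ) 1, g (-1) ≤ g x ∧ g x ≤ g 1 := by
  have h1 : (0:ℝ) < 1 - α := by linarith
  have hne : (1 - α) ≠ 0 := ne_of_gt h1
  have hm : g (-1) = 1 / (α - 1) := by
    rw [hg]
    have h : 1 + α ^ 2 - 2 * α * (2 * (-1:ℝ) ^ 2 - 1) = (1 - α) ^ 2 := by ring
    rw [h, div_eq_div_iff (by positivity) (show (α:ℝ) - 1 ≠ 0 by linarith)]
    ring
  have hp : g 1 = 1 / (1 - α) := by
    rw [hg]
    have h : 1 + α ^ 2 - 2 * α * (2 * (1:ℝ) ^ 2 - 1) = (1 - α) ^ 2 := by ring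
    rw [h, div_eq_div_iff (by positivity) hne]
    ring
  refine ⟨hm, hp, ?_⟩
  intro x hx
  obtain ⟨hxl, hxr⟩ := hx
  have hx2 : x ^ 2 ≤ 1 := by nlinarith
  have hD : 0 < 1 + α ^ 2 - 2 * α * (2 * x ^ 2 - 1) := by
    nlinarith [sq_nonneg (1 - α), mul_nonneg hα0.le (sub_nonneg.2 hx2)]
  constructor
  · rw [hm, hg]
    have h : (1:ℝ) / (α - 1) = (-1) / (1 - α) := by
      rw [div_eq_div_iff (show (α:ℝ) - 1 ≠ 0 by linarith) hne]; ring
    rw [h, div_le_div_iff₀ h1 hD]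
    nlinarith [mul_nonneg (by linarith : (0:ℝ) ≤ 1 + x) (by nlinarith : (0:ℝ) ≤ (1+α)^2 - 4*α*x)]
  · rw [hp, hg]
    rw [div_le_div_iff₀ hD h1]
    nlinarith [mul_nonneg (by linarith : (0:ℝ) ≤ 1 - x) (by nlinarith : (0:ℝ) ≤ (1+α)^2 + 4*α*x)]
end

section
/- For 0 ≤ α < 1 and every z in the open unit disk, the real part of F_α(z) = z/(1 - α z²) satisfies 1/(α-1) < Re F_α(z) < 1/(1-α). -/
/-! Since `|Re w| ≤ ‖w‖`, it suffices to bound `‖z / (1 - a z²)‖` for `‖a‖, ‖z‖ < 1`. With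
`r = ‖z‖`, the triangle inequality gives `‖z / (1 - a z²)‖ ≤ r / (1 - ‖a‖ r²)`, and
`1 - ‖a‖ r² - r (1 - ‖a‖) = (1 - r)(1 + ‖a‖ r) > 0`. -/

lemma mul_one_sub_lt_one_sub_mul_sq {a r : ℝ} (ha : 0 ≤ a) (hr0 : 0 ≤ r) (hr : r < 1) :
    r * (1 - a) < 1 - a * r ^ 2 := by
  have hfactor : 1 - a * r ^ 2 - r * (1 - a) = (1 - r) * (1 + a * r) := by ring
  have : 0 < (1 - r) * (1 + a * r) := mul_pos (by linarith) (by positivity)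
  linarith

lemma norm_div_one_sub_mul_sq_lt {𝕜 : Type*} [NormedField 𝕜] {a z : 𝕜}
    (ha : ‖a‖ < 1) (hz : ‖z‖ < 1) :
    ‖z / (1 - a * z ^ 2)‖ < 1 / (1 - ‖a‖) := by
  have hden : 1 - ‖a‖ * ‖z‖ ^ 2 ≤ ‖1 - a * z ^ 2‖ := by
    calc 1 - ‖a‖ * ‖z‖ ^ 2 = ‖(1 : 𝕜)‖ - ‖a * z ^ 2‖ := by rw [norm_one, norm_mul, norm_pow]
      _ ≤ ‖1 - a * z ^ 2‖ := norm_sub_norm_le _ _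
  have hnum : ‖z‖ * (1 - ‖a‖) < 1 - ‖a‖ * ‖z‖ ^ 2 :=
    mul_one_sub_lt_one_sub_mul_sq (norm_nonneg a) (norm_nonneg z) hz
  have hden_pos : 0 < ‖1 - a * z ^ 2‖ :=
    lt_of_le_of_lt' hden (by nlinarith [norm_nonneg a, norm_nonneg z])
  rw [norm_div, div_lt_div_iff₀ hden_pos (by linarith), one_mul]
  exact hnum.trans_le hden

theorem re_F_alpha_bounds (α : ℝ) (hα0 : 0 ≤ α) (hα1 : α < 1)
    (z : ℂ) (hz : ‖z‖ < 1) :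
    1 / (α - 1) < (z / (1 - (α : ℂ) * z ^ 2)).re ∧
    (z / (1 - (α : ℂ) * z ^ 2)).re < 1 / (1 - α) := by
  have hnorm_α : ‖(α : ℂ)‖ = α := by rw [Complex.norm_real, Real.norm_of_nonneg hα0]
  have hbound : |(z / (1 - (α : ℂ) * z ^ 2)).re| < 1 / (1 - α) := by
    refine (Complex.abs_re_le_norm _).trans_lt ?_
    have h := norm_div_one_sub_mul_sq_lt (a := (α : ℂ)) (by rwa [hnorm_α]) hz
    rwa [hnorm_α] at h
  have hneg : 1 / (α - 1) = -(1 / (1 - α)) := by rw [← one_div_neg_eq_neg_one_div, neg_sub]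
  rw [hneg]
  exact abs_lt.mp hbound
end

section
/- If g(z) = 1 + c_1 z + c_2 z² + ⋯ is analytic on the unit disk with Re g(z) > 0 for all |z| < 1, then for any complex number μ, |c_2 - μ c_1²| ≤ 2 max{1, |2μ - 1|}. -/
/-!
The Cayley transform `ω = (g - 1) / (g + 1)` maps the unit disc to itself and fixes `0`.
Writing `ω = z φ`, the Schwarz–Pick inequality for `φ` at `0` gives Schur's bound
`|b₂| ≤ 1 - |b₁|²` for `ω = b₁ z + b₂ z² + ⋯`. Differentiating `ω (g + 1) = g - 1` twice at `0`
gives `c₁ = 2 b₁` and `c₂ = 2 b₂ + 2 b₁²`, so `c₂ - μ c₁² = 2 (b₂ + (1 - 2μ) b₁²)`, whose modulus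
is at most `2 ((1 - |b₁|²) + |2μ - 1| |b₁|²) ≤ 2 max {1, |2μ - 1|}`.
-/

open Complex ComplexConjugate Metric Set Filter Topology

theorem norm_sub_le_norm_one_sub_conj_mul {a u : ℂ} (ha : ‖a‖ ≤ 1) (hu : ‖u‖ ≤ 1) :
    ‖u - a‖ ≤ ‖1 - conj a * u‖ := by
  have key : ‖1 - conj a * u‖ ^ 2 - ‖u - a‖ ^ 2 = (1 - ‖a‖ ^ 2) * (1 - ‖u‖ ^ 2) := by
    simp only [Complex.sq_norm, normSq_apply, sub_re, sub_im, mul_re, mul_im, one_re, one_im,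
      conj_re, conj_im]
    ring
  have : 0 ≤ (1 - ‖a‖ ^ 2) * (1 - ‖u‖ ^ 2) := by
    apply mul_nonneg <;> nlinarith [norm_nonneg a, norm_nonneg u]
  exact le_of_pow_le_pow_left₀ two_ne_zero (norm_nonneg _) (by linarith)

theorem norm_sub_one_div_add_one_le_one {w : ℂ} (hw : 0 ≤ w.re) : ‖(w - 1) / (w + 1)‖ ≤ 1 := by
  have key : ‖w + 1‖ ^ 2 - ‖w - 1‖ ^ 2 = 4 * w.re := by
    simp only [Complex.sq_norm, normSq_apply, sub_re, sub_im, add_re, add_im, one_re, one_im]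
    ring
  rw [norm_div]
  exact div_le_one_of_le₀ (le_of_pow_le_pow_left₀ two_ne_zero (norm_nonneg _) (by linarith))
    (norm_nonneg _)

theorem norm_add_mul_sq_le_max {a b ν : ℂ} (ha : ‖a‖ ≤ 1) (hb : ‖b‖ ≤ 1 - ‖a‖ ^ 2) :
    ‖b + ν * a ^ 2‖ ≤ max 1 ‖ν‖ := by
  have ht : ‖a‖ ^ 2 ≤ 1 := pow_le_one₀ (norm_nonneg a) ha
  calc ‖b + ν * a ^ 2‖ ≤ ‖b‖ + ‖ν‖ * ‖a‖ ^ 2 :=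
        (norm_add_le _ _).trans_eq (by rw [norm_mul, norm_pow])
    _ ≤ (1 - ‖a‖ ^ 2) * max 1 ‖ν‖ + ‖a‖ ^ 2 * max 1 ‖ν‖ := by
        nlinarith [le_max_left 1 ‖ν‖, le_max_right 1 ‖ν‖, sq_nonneg ‖a‖]
    _ = max 1 ‖ν‖ := by ring

section SecondDerivative

variable {𝕜 : Type*} [NontriviallyNormedField 𝕜] {f g w : 𝕜 → 𝕜} {x : 𝕜}

theorem iteratedDeriv_two_mul (hf : ContDiffAt 𝕜 2 f x) (hg : ContDiffAt 𝕜 2 g x) :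
    iteratedDeriv 2 (fun z => f z * g z) x =
      iteratedDeriv 2 f x * g x + 2 * deriv f x * deriv g x + f x * iteratedDeriv 2 g x := by
  rw [iteratedDeriv_fun_mul hf hg]
  simp only [Finset.sum_range_succ, Finset.range_one, Finset.sum_singleton, Nat.choose_zero_right,
    Nat.choose_succ_self_right, Nat.choose_self, Nat.reduceAdd, Nat.add_one_sub_one, tsub_zero,
    tsub_self, iteratedDeriv_zero, iteratedDeriv_one]
  push_cast
  ring

theorem iteratedDeriv_two_sub_mul (hf : ContDiffAt 𝕜 2 f x) :
    iteratedDeriv 2 (fun z => (z - x) * f z) x = 2 * deriv f x := by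
  rw [iteratedDeriv_two_mul (by fun_prop) hf]
  simp [iteratedDeriv_succ]

theorem eq_one_of_mul_add_one_eq (hwx : w x = 0)
    (h : (fun z => w z * (f z + 1)) =ᶠ[𝓝 x] fun z => f z - 1) : f x = 1 :=
  sub_eq_zero.mp (by simpa [hwx] using h.eq_of_nhds.symm)

theorem deriv_eq_of_mul_add_one_eq (hf : DifferentiableAt 𝕜 f x) (hw : DifferentiableAt 𝕜 w x)
    (hwx : w x = 0) (h : (fun z => w z * (f z + 1)) =ᶠ[𝓝 x] fun z => f z - 1) :
    deriv f x = 2 * deriv w x := by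
  have hderiv := h.deriv_eq
  rw [deriv_fun_mul hw (hf.add_const 1), deriv_add_const, deriv_sub_const, hwx,
    eq_one_of_mul_add_one_eq hwx h] at hderiv
  linear_combination -hderiv

theorem iteratedDeriv_two_eq_of_mul_add_one_eq (hf : ContDiffAt 𝕜 2 f x)
    (hw : ContDiffAt 𝕜 2 w x) (hwx : w x = 0)
    (h : (fun z => w z * (f z + 1)) =ᶠ[𝓝 x] fun z => f z - 1) :
    iteratedDeriv 2 f x = 2 * iteratedDeriv 2 w x + 4 * deriv w x ^ 2 := by
  have hderiv := deriv_eq_of_mul_add_one_eq (hf.differentiableAt two_ne_zero)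
    (hw.differentiableAt two_ne_zero) hwx h
  have hderiv2 := (h.iteratedDeriv 2).eq_of_nhds
  rw [iteratedDeriv_two_mul hw (by fun_prop)] at hderiv2
  simp only [iteratedDeriv_succ, iteratedDeriv_zero, deriv_add_const', deriv_sub_const_fun, hwx,
    eq_one_of_mul_add_one_eq hwx h, hderiv] at hderiv2 ⊢
  linear_combination -hderiv2

end SecondDerivative

theorem norm_deriv_le_one_sub_sq_of_mapsTo_closedBall {φ : ℂ → ℂ}
    (hd : DifferentiableOn ℂ φ (ball 0 1)) (hmaps : MapsTo φ (ball 0 1) (closedBall 0 1)) :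
    ‖deriv φ 0‖ ≤ 1 - ‖φ 0‖ ^ 2 := by
  have h0 : (0 : ℂ) ∈ ball (0 : ℂ) 1 := mem_ball_self one_pos
  have hφ : ∀ z ∈ ball (0 : ℂ) 1, ‖φ z‖ ≤ 1 := fun z hz => by simpa using hmaps hz
  set a := φ 0
  rcases (hφ 0 h0).eq_or_lt with ha | ha
  · -- maximum modulus at the centre: `φ` is constant
    have hconst : EqOn φ (fun _ => a) (ball 0 1) :=
      eqOn_of_isPreconnected_of_isMaxOn_norm (convex_ball 0 1).isPreconnected isOpen_ball hd h0
        fun z hz => (hφ z hz).trans ha.ge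
    rw [(hconst.eventuallyEq_of_mem (isOpen_ball.mem_nhds h0)).deriv_eq, deriv_const, ha]
    norm_num
  · have hpos : 0 < 1 - ‖a‖ ^ 2 := sub_pos.mpr (pow_lt_one₀ (norm_nonneg a) ha two_ne_zero)
    have hden : ∀ z ∈ ball (0 : ℂ) 1, 1 - conj a * φ z ≠ 0 := fun z hz => by
      refine sub_ne_zero.mpr (ne_of_apply_ne norm ?_)
      rw [norm_one, norm_mul, RCLike.norm_conj]
      exact (mul_lt_one_of_nonneg_of_lt_one_left (norm_nonneg a) ha (hφ z hz)).ne'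
    set ψ : ℂ → ℂ := fun z => (φ z - a) / (1 - conj a * φ z)
    have hψd : DifferentiableOn ℂ ψ (ball 0 1) :=
      (hd.sub_const a).div ((differentiableOn_const 1).sub (hd.const_mul _)) hden
    have hψmaps : MapsTo ψ (ball 0 1) (closedBall (ψ 0) 1) := fun z hz => by
      rw [mem_closedBall, dist_eq_norm]
      simp only [ψ, a, sub_self, zero_div, sub_zero, norm_div]
      exact div_le_one_of_le₀ (norm_sub_le_norm_one_sub_conj_mul ha.le (hφ z hz)) (norm_nonneg _)
    have hψ' : deriv ψ 0 = deriv φ 0 / (1 - ‖a‖ ^ 2 : ℝ) := by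
      have hφ' := (hd.differentiableAt (isOpen_ball.mem_nhds h0)).hasDerivAt
      rw [((hφ'.sub_const a).fun_div ((hφ'.const_mul (conj a)).const_sub 1) (hden 0 h0)).deriv]
      have : ((1 - ‖a‖ ^ 2 : ℝ) : ℂ) ≠ 0 := ofReal_ne_zero.mpr hpos.ne'
      push_cast at this ⊢
      rw [conj_mul']
      field_simp
      ring
    have hschwarz := norm_deriv_le_one_of_mapsTo_ball hψd hψmaps one_pos
    rwa [hψ', norm_div, norm_real, Real.norm_of_nonneg hpos.le, div_le_one hpos] at hschwarz

theorem norm_iteratedDeriv_two_div_two_le {ω : ℂ → ℂ} (hd : DifferentiableOn ℂ ω (ball 0 1))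
    (hω0 : ω 0 = 0) (hmaps : MapsTo ω (ball 0 1) (closedBall 0 1)) :
    ‖iteratedDeriv 2 ω 0 / 2‖ ≤ 1 - ‖deriv ω 0‖ ^ 2 := by
  set φ := dslope ω 0
  have hφd : DifferentiableOn ℂ φ (ball 0 1) :=
    (differentiableOn_dslope (ball_mem_nhds _ one_pos)).mpr hd
  have hφmaps : MapsTo φ (ball 0 1) (closedBall 0 1) := fun z hz => by
    simpa [hω0] using norm_dslope_le_div_of_mapsTo_ball hd (by rwa [hω0]) hz
  have hω : ω = fun z => (z - 0) * φ z := funext fun z => by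
    simpa [hω0] using (sub_smul_dslope ω 0 z).symm
  have h2 : iteratedDeriv 2 ω 0 = 2 * deriv φ 0 := by
    rw [hω, iteratedDeriv_two_sub_mul (hφd.analyticAt (ball_mem_nhds _ one_pos)).contDiffAt]
  rw [h2, mul_div_cancel_left₀ _ two_ne_zero, ← dslope_same ω 0]
  exact norm_deriv_le_one_sub_sq_of_mapsTo_closedBall hφd hφmaps

theorem keogh_merkes (g : ℂ → ℂ) (hg : DifferentiableOn ℂ g (ball (0:ℂ) 1))
    (hg0 : g 0 = 1) (hre : ∀ z ∈ ball (0:ℂ) 1, 0 < (g z).re) (μ : ℂ) :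
    ‖iteratedDeriv 2 g 0 / 2 - μ * (deriv g 0) ^ 2‖ ≤ 2 * max 1 ‖2 * μ - 1‖ := by
  have h0 : ball (0 : ℂ) 1 ∈ 𝓝 0 := ball_mem_nhds _ one_pos
  have hden : ∀ z ∈ ball (0 : ℂ) 1, g z + 1 ≠ 0 := fun z hz h => by
    have := congrArg re h
    simp only [add_re, one_re, zero_re] at this
    linarith [hre z hz]
  set ω : ℂ → ℂ := fun z => (g z - 1) / (g z + 1)
  have hωd : DifferentiableOn ℂ ω (ball 0 1) := (hg.sub_const 1).div (hg.add_const 1) hden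
  have hω0 : ω 0 = 0 := by simp [ω, hg0]
  have hmaps : MapsTo ω (ball 0 1) (closedBall 0 1) := fun z hz => by
    simpa [ω] using norm_sub_one_div_add_one_le_one (hre z hz).le
  have hrel : (fun z => ω z * (g z + 1)) =ᶠ[𝓝 0] fun z => g z - 1 :=
    eventually_of_mem h0 fun z hz => div_mul_cancel₀ _ (hden z hz)
  have hc1 := deriv_eq_of_mul_add_one_eq (hg.differentiableAt h0) (hωd.differentiableAt h0)
    hω0 hrel
  have hc2 := iteratedDeriv_two_eq_of_mul_add_one_eq (hg.analyticAt h0).contDiffAt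
    (hωd.analyticAt h0).contDiffAt hω0 hrel
  have hb₁ : ‖deriv ω 0‖ ≤ 1 := norm_deriv_le_one_of_mapsTo_ball hωd (by rwa [hω0]) one_pos
  have hb₂ := norm_iteratedDeriv_two_div_two_le hωd hω0 hmaps
  calc ‖iteratedDeriv 2 g 0 / 2 - μ * deriv g 0 ^ 2‖
      = ‖2 * (iteratedDeriv 2 ω 0 / 2 + (1 - 2 * μ) * deriv ω 0 ^ 2)‖ := by
        rw [hc1, hc2]
        congr 1
        ring
    _ ≤ 2 * max 1 ‖2 * μ - 1‖ := by
        rw [norm_mul, Complex.norm_two, ← norm_neg (2 * μ - 1), neg_sub]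
        gcongr
        exact norm_add_mul_sq_le_max hb₁ hb₂
end

section
/- If p(z) = Σ_{n≥1} A_n z^n is analytic on the unit disk and subordinate to a convex univalent function q(z) = Σ_{n≥1} C_n z^n (q maps the disk onto a convex domain), then |A_n| ≤ |C_1| for all n ≥ 1. -/
/-!
Let `ζ` be a primitive `n`-th root of unity. The rotation average
`φ z = n⁻¹ * ∑_{k < n} p (ζ ^ k * z)` keeps exactly the Taylor coefficients `A_{mn}` of `p`, so its
expansion starts with `A_n z ^ n`; and `φ` takes values in the convex set `q(𝔻)`, being an average
of the values `p (ζ ^ k * z) ∈ q(𝔻)`. Since `q` is univalent, `w = q⁻¹ ∘ φ` is a holomorphic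
self-map of the disk fixing `0`, and `q ζ = ζ * dslope q 0 ζ` gives `w = φ / (dslope q 0 ∘ w)`. The
`n`-th coefficient of `w` is therefore `A_n / C_1`, and Cauchy's estimate bounds it by `1`.
-/

open Complex Metric Filter Function Set Topology

theorem IsPrimitiveRoot.sum_pow_mul_eq_ite {K : Type*} [Field K] {ζ : K} {n : ℕ}
    (hζ : IsPrimitiveRoot ζ n) (j : ℕ) :
    ∑ k ∈ Finset.range n, ζ ^ (k * j) = if n ∣ j then (n : K) else 0 := by
  simp_rw [mul_comm _ j, pow_mul]
  split_ifs with hdvd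
  · simp [(hζ.pow_eq_one_iff_dvd j).mpr hdvd]
  · have hj : ζ ^ j ≠ 1 := mt (hζ.pow_eq_one_iff_dvd j).mp hdvd
    rw [geom_sum_eq hj, ← pow_mul, mul_comm, pow_mul, hζ.pow_eq_one, one_pow, sub_self, zero_div]

theorem iteratedDeriv_comp_const_mul_of_isOpen {f : ℂ → ℂ} {s : Set ℂ} (hs : IsOpen s)
    (hf : DifferentiableOn ℂ f s) {c : ℂ} (hc : MapsTo (c * ·) s s) {x : ℂ} (hx : x ∈ s) (n : ℕ) :
    iteratedDeriv n (fun z => f (c * z)) x = c ^ n * iteratedDeriv n f (c * x) := by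
  rw [← iteratedDerivWithin_of_isOpen hs hx, ← iteratedDerivWithin_of_isOpen hs (hc hx)]
  exact iteratedDerivWithin_comp_const_smul hx hs.uniqueDiffOn (hf.contDiffOn hs) c hc

theorem iteratedDeriv_mul_of_forall_lt_iteratedDeriv_eq_zero {𝕜 𝔸 : Type*}
    [NontriviallyNormedField 𝕜] [NormedRing 𝔸] [NormedAlgebra 𝕜 𝔸] {f g : 𝕜 → 𝔸} {x : 𝕜} {n : ℕ}
    (hf : ContDiffAt 𝕜 n f x) (hg : ContDiffAt 𝕜 n g x)
    (hzero : ∀ i < n, iteratedDeriv i f x = 0) :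
    iteratedDeriv n (f * g) x = iteratedDeriv n f x * g x := by
  rw [iteratedDeriv_mul hf hg, Finset.sum_range_succ,
    Finset.sum_eq_zero fun i hi => by rw [hzero i (Finset.mem_range.mp hi), mul_zero, zero_mul]]
  simp

theorem Complex.norm_iteratedDeriv_le_of_forall_mem_ball_norm_le {c : ℂ} {R M : ℝ} {f : ℂ → ℂ}
    (n : ℕ) (hR : 0 < R) (hf : DifferentiableOn ℂ f (ball c R))
    (hM : ∀ z ∈ ball c R, ‖f z‖ ≤ M) :
    ‖iteratedDeriv n f c‖ ≤ n.factorial * M / R ^ n := by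
  have hbound : ∀ r ∈ Ioo 0 R, ‖iteratedDeriv n f c‖ ≤ n.factorial * M / r ^ n := fun r hr =>
    norm_iteratedDeriv_le_of_forall_mem_sphere_norm_le n hr.1
      (hf.diffContOnCl_ball (closedBall_subset_ball hr.2)) fun z hz =>
        hM z (sphere_subset_closedBall.trans (closedBall_subset_ball hr.2) hz)
  have hcont : ContinuousWithinAt (fun r : ℝ => n.factorial * M / r ^ n) (Iio R) R :=
    (continuousAt_const.div (continuousAt_pow R n) (pow_ne_zero n hR.ne')).continuousWithinAt
  refine ge_of_tendsto hcont ?_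
  filter_upwards [Ioo_mem_nhdsLT hR] using hbound

theorem AnalyticAt.exists_pow_eq {g : ℂ → ℂ} {z₀ : ℂ} (hg : AnalyticAt ℂ g z₀)
    (hg0 : g z₀ ≠ 0) {k : ℕ} (hk : k ≠ 0) :
    ∃ l : ℂ → ℂ, AnalyticAt ℂ l z₀ ∧ l z₀ ≠ 0 ∧ ∀ᶠ z in 𝓝 z₀, l z ^ k = g z := by
  set d : ℂ := g z₀ ^ (k : ℂ)⁻¹
  have hdk : d ^ k = g z₀ := cpow_nat_inv_pow _ hk
  have hd0 : d ≠ 0 := by rintro h; rw [h, zero_pow hk] at hdk; exact hg0 hdk.symm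
  have hkc : (k : ℂ) ≠ 0 := Nat.cast_ne_zero.mpr hk
  -- the principal branch of `log` is analytic near `g z₀ / g z₀ = 1`
  refine ⟨fun z => d * Complex.exp (Complex.log (g z / g z₀) / k), ?_, by simp [hg0, hd0], ?_⟩
  · refine analyticAt_const.mul (analyticAt_cexp.comp (.div ?_ analyticAt_const hkc))
    refine (analyticAt_clog ?_).comp (hg.div analyticAt_const hg0)
    simp [hg0, one_mem_slitPlane]
  · filter_upwards [hg.continuousAt.eventually_ne hg0] with z hz
    rw [mul_pow, hdk, ← exp_nat_mul, mul_div_cancel₀ _ hkc, exp_log (div_ne_zero hz hg0),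
      mul_div_cancel₀ _ hg0]

theorem AnalyticAt.not_injOn_pow_of_deriv_ne_zero {r : ℂ → ℂ} {z₀ : ℂ} (hr : AnalyticAt ℂ r z₀)
    (hr0 : r z₀ = 0) (hr' : deriv r z₀ ≠ 0) {k : ℕ} (hk : 2 ≤ k) {s : Set ℂ} (hs : s ∈ 𝓝 z₀) :
    ¬ InjOn (fun z => r z ^ k) s := by
  intro hinj
  have hopen : 𝓝 (r z₀) ≤ map r (𝓝 z₀) := by
    refine hr.eventually_constant_or_nhds_le_map_nhds.resolve_left fun hconst => hr' ?_
    rw [Filter.EventuallyEq.deriv_eq (hconst : r =ᶠ[𝓝 z₀] fun _ => r z₀), deriv_const]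
  obtain ⟨ε, hε, hball⟩ := Metric.mem_nhds_iff.mp (hopen (image_mem_map hs))
  rw [hr0] at hball
  have hω := isPrimitiveRoot_exp k (by omega)
  set ω := exp (2 * Real.pi * I / k)
  have hωnorm : ‖ω‖ = 1 := hω.norm'_eq_one (by omega)
  set y : ℂ := ((ε / 2 : ℝ) : ℂ)
  have hy0 : y ≠ 0 := by simp [y, hε.ne']
  have hy : y ∈ ball (0 : ℂ) ε := by simp [y, abs_of_pos hε]; linarith
  have hωy : ω * y ∈ ball (0 : ℂ) ε := by simpa [hωnorm] using hy
  obtain ⟨a, ha, hra⟩ := hball hy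
  obtain ⟨b, hb, hrb⟩ := hball hωy
  have hab : a = b := hinj ha hb (by simp only [hra, hrb, mul_pow, hω.pow_eq_one, one_mul])
  apply hω.ne_one (by omega)
  apply mul_right_cancel₀ hy0
  rw [← hrb, ← hab, hra, one_mul]

theorem deriv_ne_zero_of_injOn {q : ℂ → ℂ} {s : Set ℂ} (hs : IsOpen s)
    (hq : DifferentiableOn ℂ q s) (hinj : InjOn q s) {z₀ : ℂ} (hz₀ : z₀ ∈ s) :
    deriv q z₀ ≠ 0 := by
  intro h0
  have hsn : s ∈ 𝓝 z₀ := hs.mem_nhds hz₀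
  have hfa : AnalyticAt ℂ (fun z => q z - q z₀) z₀ := (hq.analyticAt hsn).sub analyticAt_const
  cases hk : analyticOrderAt (fun z => q z - q z₀) z₀ with
  | top =>
    have hev : ∀ᶠ z in 𝓝[≠] z₀, (q z - q z₀ = 0 ∧ z ∈ s) ∧ z ≠ z₀ :=
      (eventually_nhdsWithin_of_eventually_nhds
        ((analyticOrderAt_eq_top.mp hk).and (hs.eventually_mem hz₀))).and self_mem_nhdsWithin
    obtain ⟨z, ⟨hzq, hzs⟩, hz⟩ := hev.exists
    exact hz (hinj hzs hz₀ (sub_eq_zero.mp hzq))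
  | coe k =>
    have hk2 : 2 ≤ k := by
      have : ((2 : ℕ) : ℕ∞) ≤ analyticOrderAt (fun z => q z - q z₀) z₀ :=
        (natCast_le_analyticOrderAt_iff_iteratedDeriv_eq_zero hfa).mpr fun i hi => by
          interval_cases i <;> simp [deriv_sub_const, h0]
      exact_mod_cast hk ▸ this
    obtain ⟨g, hga, hg0, hqg⟩ := hfa.analyticOrderAt_eq_natCast.mp hk
    obtain ⟨l, hla, hl0, hlg⟩ := hga.exists_pow_eq hg0 (k := k) (by omega)
    -- near `z₀`, `q = q z₀ + r ^ k` with `r` a local coordinate, and `r ^ k` is not injective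
    set r : ℂ → ℂ := fun z => (z - z₀) * l z
    have hrd : HasDerivAt r (l z₀) z₀ := by
      simpa using ((hasDerivAt_id z₀).sub_const z₀).fun_mul hla.differentiableAt.hasDerivAt
    have hqr : ∀ᶠ z in 𝓝 z₀, q z = r z ^ k + q z₀ := by
      filter_upwards [hqg, hlg] with z hz hlz
      rw [mul_pow, hlz, ← smul_eq_mul, ← hz, sub_add_cancel]
    obtain ⟨t, ht, htq⟩ := (hqr.and hsn).exists_mem
    refine AnalyticAt.not_injOn_pow_of_deriv_ne_zero (r := r)
      ((analyticAt_id.sub analyticAt_const).mul hla) (by simp [r])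
      (hrd.deriv ▸ hl0) hk2 ht fun a ha b hb hab => hinj (htq a ha).2 (htq b hb).2 ?_
    rw [(htq a ha).1, (htq b hb).1, show r a ^ k = r b ^ k from hab]

theorem hasStrictDerivAt_invFunOn {q : ℂ → ℂ} {s : Set ℂ} (hs : IsOpen s)
    (hq : DifferentiableOn ℂ q s) (hinj : InjOn q s) {x : ℂ} (hx : x ∈ s) :
    HasStrictDerivAt (invFunOn q s) (deriv q x)⁻¹ (q x) :=
  (hq.analyticAt (hs.mem_nhds hx)).hasStrictDerivAt.to_local_left_inverse
    (deriv_ne_zero_of_injOn hs hq hinj hx)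
    (eventually_of_mem (hs.mem_nhds hx) hinj.leftInvOn_invFunOn)

theorem norm_iteratedDeriv_le_of_mapsTo_image_ball {f q : ℂ → ℂ}
    (hf : DifferentiableOn ℂ f (ball 0 1)) (hq : DifferentiableOn ℂ q (ball 0 1))
    (hinj : InjOn q (ball 0 1)) (hq0 : q 0 = 0) (hfq : MapsTo f (ball 0 1) (q '' ball 0 1))
    {n : ℕ} (hn : n ≠ 0) (hzero : ∀ j < n, iteratedDeriv j f 0 = 0) :
    ‖iteratedDeriv n f 0‖ ≤ n.factorial * ‖deriv q 0‖ := by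
  have h0 : (0 : ℂ) ∈ ball (0 : ℂ) 1 := mem_ball_self one_pos
  have hf0 : f 0 = 0 := by simpa using hzero 0 (Nat.pos_of_ne_zero hn)
  -- the Schwarz function of the subordination `f ≺ q`
  set w : ℂ → ℂ := fun z => invFunOn q (ball 0 1) (f z)
  have hwq : ∀ z ∈ ball (0 : ℂ) 1, w z ∈ ball (0 : ℂ) 1 ∧ q (w z) = f z := fun z hz =>
    invFunOn_pos (hfq hz)
  have hw0 : w 0 = 0 := hinj (hwq 0 h0).1 h0 (by rw [(hwq 0 h0).2, hf0, hq0])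
  have hwd : DifferentiableOn ℂ w (ball 0 1) := fun z hz => by
    obtain ⟨x, hx, hxz⟩ := hfq hz
    have hinv := (hasStrictDerivAt_invFunOn isOpen_ball hq hinj hx).hasDerivAt.differentiableAt
    rw [hxz] at hinv
    exact hinv.comp_differentiableWithinAt z (hf z hz)
  have hw_le : ‖iteratedDeriv n w 0‖ ≤ n.factorial := by
    simpa using norm_iteratedDeriv_le_of_forall_mem_ball_norm_le n one_pos hwd
      fun z hz => (mem_ball_zero_iff.mp (hwq z hz).1).le
  have hq' : deriv q 0 ≠ 0 := deriv_ne_zero_of_injOn isOpen_ball hq hinj h0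
  have hdslope : ∀ ζ ∈ ball (0 : ℂ) 1, dslope q 0 ζ ≠ 0 := fun ζ hζ hζ0 => by
    have hqζ := sub_smul_dslope q 0 ζ
    rw [hζ0, smul_zero, hq0, sub_zero] at hqζ
    obtain rfl : ζ = 0 := hinj hζ h0 (hqζ.symm.trans hq0.symm)
    exact hq' (dslope_same q 0 ▸ hζ0)
  set h : ℂ → ℂ := fun z => (dslope q 0 (w z))⁻¹
  have hhd : DifferentiableOn ℂ h (ball 0 1) :=
    (((differentiableOn_dslope (isOpen_ball.mem_nhds h0)).mpr hq).comp hwd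
      fun z hz => (hwq z hz).1).inv fun z hz => hdslope _ (hwq z hz).1
  have hw_eq : w =ᶠ[𝓝 0] f * h := by
    filter_upwards [isOpen_ball.mem_nhds h0] with z hz
    have hqw := sub_smul_dslope q 0 (w z)
    rw [sub_zero, hq0, sub_zero, smul_eq_mul, (hwq z hz).2] at hqw
    simp only [Pi.mul_apply, h, ← hqw]
    field_simp [hdslope _ (hwq z hz).1]
  have hcoeff : iteratedDeriv n w 0 = iteratedDeriv n f 0 * (deriv q 0)⁻¹ := by
    rw [hw_eq.iteratedDeriv_eq, iteratedDeriv_mul_of_forall_lt_iteratedDeriv_eq_zero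
      ((hf.contDiffOn isOpen_ball).contDiffAt (isOpen_ball.mem_nhds h0))
      ((hhd.contDiffOn isOpen_ball).contDiffAt (isOpen_ball.mem_nhds h0)) hzero]
    simp [h, hw0, dslope_same]
  rwa [hcoeff, norm_mul, norm_inv, ← div_eq_mul_inv, div_le_iff₀ (norm_pos_iff.mpr hq')] at hw_le

theorem mapsTo_const_mul_ball_zero {c : ℂ} (hc : ‖c‖ ≤ 1) (R : ℝ) :
    MapsTo (c * ·) (ball (0 : ℂ) R) (ball 0 R) := fun z hz => by
  rw [mem_ball_zero_iff] at hz ⊢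
  calc ‖c * z‖ = ‖c‖ * ‖z‖ := norm_mul c z
    _ ≤ ‖z‖ := mul_le_of_le_one_left (norm_nonneg z) hc
    _ < R := hz

noncomputable def rotationAverage (ζ : ℂ) (n : ℕ) (f : ℂ → ℂ) (z : ℂ) : ℂ :=
  (n : ℂ)⁻¹ * ∑ k ∈ Finset.range n, f (ζ ^ k * z)

section rotationAverage

variable {ζ : ℂ} {n : ℕ} {f : ℂ → ℂ} {R : ℝ}

theorem mapsTo_pow_mul_ball_zero (hζ : ‖ζ‖ ≤ 1) (k : ℕ) (R : ℝ) :
    MapsTo (ζ ^ k * ·) (ball (0 : ℂ) R) (ball 0 R) :=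
  mapsTo_const_mul_ball_zero ((norm_pow ζ k).trans_le (pow_le_one₀ (norm_nonneg ζ) hζ)) R

theorem differentiableOn_rotationAverage (hζ : ‖ζ‖ ≤ 1) (hf : DifferentiableOn ℂ f (ball 0 R)) :
    DifferentiableOn ℂ (rotationAverage ζ n f) (ball 0 R) :=
  (DifferentiableOn.fun_sum fun k _ =>
    hf.comp (differentiableOn_id.const_mul _) (mapsTo_pow_mul_ball_zero hζ k R)).const_mul _

theorem mapsTo_rotationAverage {S : Set ℂ} (hS : Convex ℝ S) (hζ : ‖ζ‖ ≤ 1) (hn : n ≠ 0)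
    (hf : MapsTo f (ball 0 R) S) : MapsTo (rotationAverage ζ n f) (ball 0 R) S := fun z hz => by
  have hmean : rotationAverage ζ n f z = ∑ k ∈ Finset.range n, (n : ℝ)⁻¹ • f (ζ ^ k * z) := by
    simp [rotationAverage, Finset.mul_sum, Complex.real_smul]
  rw [hmean]
  refine hS.sum_mem (fun _ _ => by positivity) (by simp [hn]) fun k _ => hf ?_
  exact mapsTo_pow_mul_ball_zero hζ k R hz

theorem iteratedDeriv_rotationAverage (hζ : IsPrimitiveRoot ζ n) (hn : n ≠ 0) (hR : 0 < R)
    (hf : DifferentiableOn ℂ f (ball 0 R)) (j : ℕ) :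
    iteratedDeriv j (rotationAverage ζ n f) 0 = if n ∣ j then iteratedDeriv j f 0 else 0 := by
  have h0 : (0 : ℂ) ∈ ball (0 : ℂ) R := mem_ball_self hR
  have hζ1 : ‖ζ‖ ≤ 1 := (hζ.norm'_eq_one hn).le
  have hterm : ∀ k, iteratedDeriv j (fun z => f (ζ ^ k * z)) 0 =
      ζ ^ (k * j) * iteratedDeriv j f 0 := fun k => by
    rw [iteratedDeriv_comp_const_mul_of_isOpen isOpen_ball hf
      (mapsTo_pow_mul_ball_zero hζ1 k R) h0, mul_zero, pow_mul]
  have hsmooth : ∀ k ∈ Finset.range n, ContDiffAt ℂ j (fun z => f (ζ ^ k * z)) 0 := fun k _ =>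
    ((hf.comp (differentiableOn_id.const_mul _) (mapsTo_pow_mul_ball_zero hζ1 k R)).contDiffOn
      isOpen_ball).contDiffAt (isOpen_ball.mem_nhds h0)
  unfold rotationAverage
  rw [iteratedDeriv_const_mul_field, iteratedDeriv_fun_sum hsmooth]
  simp only [hterm, ← Finset.sum_mul, hζ.sum_pow_mul_eq_ite]
  split_ifs <;> simp [hn]

end rotationAverage

theorem rogosinski_convex (p q : ℂ → ℂ)
    (hp : DifferentiableOn ℂ p (ball (0:ℂ) 1))
    (hq : DifferentiableOn ℂ q (ball (0:ℂ) 1))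
    (hq_inj : Set.InjOn q (ball (0:ℂ) 1))
    (hq_convex : Convex ℝ (q '' ball (0:ℂ) 1))
    (hp0 : p 0 = 0) (hq0 : q 0 = 0)
    (hsub : ∃ w : ℂ → ℂ, DifferentiableOn ℂ w (ball (0:ℂ) 1) ∧ w 0 = 0 ∧
      (∀ z ∈ ball (0:ℂ) 1, w z ∈ ball (0:ℂ) 1) ∧
      ∀ z ∈ ball (0:ℂ) 1, p z = q (w z)) :
    ∀ n : ℕ, 1 ≤ n → ‖iteratedDeriv n p 0 / (n.factorial : ℂ)‖ ≤ ‖deriv q 0‖ := by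
  intro n hn
  obtain ⟨w, -, -, hw_ball, hpw⟩ := hsub
  have hn0 : n ≠ 0 := by omega
  have hζ := isPrimitiveRoot_exp n hn0
  have hζ1 : ‖exp (2 * Real.pi * I / n)‖ ≤ 1 := (hζ.norm'_eq_one hn0).le
  have hp_sub : MapsTo p (ball 0 1) (q '' ball 0 1) := fun z hz =>
    ⟨w z, hw_ball z hz, (hpw z hz).symm⟩
  have hcoeff := iteratedDeriv_rotationAverage hζ hn0 one_pos hp
  have hbound := norm_iteratedDeriv_le_of_mapsTo_image_ball
    (differentiableOn_rotationAverage hζ1 hp) hq hq_inj hq0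
    (mapsTo_rotationAverage hq_convex hζ1 hn0 hp_sub) hn0 fun j hj => by
      rcases j.eq_zero_or_pos with rfl | hj0
      · simp [hcoeff, hp0]
      · simp [hcoeff, Nat.not_dvd_of_pos_of_lt hj0 hj]
  rw [hcoeff, if_pos dvd_rfl] at hbound
  rwa [norm_div, Complex.norm_natCast, div_le_iff₀' (by positivity)]
end

section
/- If f ∈ BS(α) with 0 ≤ α < 1, then αz/(α-1) type bounds hold: for all z in the unit disk, α/(α-1) < Re(z f'(z)/f(z)) < (2-α)/(1-α). -/
/-!
Writing `p = z f'(z)/f(z)` and `u = w(z)`, we have `p - 1 = u / (1 - α u²)` with `‖u‖ < 1`.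
Since `‖1 - α u²‖ ≥ 1 - α ‖u‖²`, this gives `‖p - 1‖ ≤ ‖u‖ / (1 - α ‖u‖²) < 1 / (1 - α)`, and the
two bounds are `1 ∓ 1 / (1 - α)`.
-/

open Complex Metric

section

variable {α : ℝ}

lemma one_sub_mul_sq_le_norm (hα0 : 0 ≤ α) (u : ℂ) :
    1 - α * ‖u‖ ^ 2 ≤ ‖1 - (α : ℂ) * u ^ 2‖ := by
  have hnorm : ‖(α : ℂ) * u ^ 2‖ = α * ‖u‖ ^ 2 := by
    rw [norm_mul, norm_pow, norm_real, Real.norm_of_nonneg hα0]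
  have h := norm_sub_norm_le (1 : ℂ) ((α : ℂ) * u ^ 2)
  rwa [norm_one, hnorm] at h

-- After clearing denominators, `(1 - α r²) - r (1 - α) = (1 - r)(1 + α r)`.
lemma div_one_sub_mul_sq_lt (hα0 : 0 ≤ α) (hα1 : α < 1) {r : ℝ} (hr0 : 0 ≤ r) (hr1 : r < 1) :
    r / (1 - α * r ^ 2) < 1 / (1 - α) := by
  have hden : 0 < 1 - α * r ^ 2 := by nlinarith
  rw [div_lt_div_iff₀ hden (by linarith)]
  nlinarith [mul_pos (sub_pos.2 hr1) (show 0 < 1 + α * r by positivity)]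

lemma norm_div_one_sub_mul_sq_lt_s17 (hα0 : 0 ≤ α) (hα1 : α < 1) {u : ℂ} (hu : ‖u‖ < 1) :
    ‖u / (1 - (α : ℂ) * u ^ 2)‖ < 1 / (1 - α) := by
  have hden : 0 < 1 - α * ‖u‖ ^ 2 := by nlinarith [norm_nonneg u]
  calc ‖u / (1 - (α : ℂ) * u ^ 2)‖ = ‖u‖ / ‖1 - (α : ℂ) * u ^ 2‖ := norm_div _ _
    _ ≤ ‖u‖ / (1 - α * ‖u‖ ^ 2) :=
      div_le_div_of_nonneg_left (norm_nonneg u) hden (one_sub_mul_sq_le_norm hα0 u)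
    _ < 1 / (1 - α) := div_one_sub_mul_sq_lt hα0 hα1 (norm_nonneg u) hu

lemma bounds_of_abs_sub_one_lt (hα1 : α < 1) {x : ℝ} (hx : |x - 1| < 1 / (1 - α)) :
    α / (α - 1) < x ∧ x < (2 - α) / (1 - α) := by
  have h1α : 1 - α ≠ 0 := by linarith
  have hlower : α / (α - 1) = 1 - 1 / (1 - α) := by
    rw [show α - 1 = -(1 - α) by ring]
    field_simp
    ring
  have hupper : (2 - α) / (1 - α) = 1 + 1 / (1 - α) := by
    field_simp
    ring
  rw [abs_lt] at hx
  rw [hlower, hupper]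
  constructor <;> linarith [hx.1, hx.2]

end

theorem BS_re_bounds_general (α : ℝ) (hα0 : 0 ≤ α) (hα1 : α < 1)
    (f : ℂ → ℂ)
    (hsub : ∃ w : ℂ → ℂ, DifferentiableOn ℂ w (ball (0:ℂ) 1) ∧ w 0 = 0 ∧
      (∀ z ∈ ball (0:ℂ) 1, w z ∈ ball (0:ℂ) 1) ∧
      ∀ z ∈ ball (0:ℂ) 1, z ≠ 0 →
        z * deriv f z / f z - 1 = w z / (1 - (α : ℂ) * (w z) ^ 2)) :
    ∀ z ∈ ball (0:ℂ) 1, z ≠ 0 →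
      α / (α - 1) < (z * deriv f z / f z).re ∧
      (z * deriv f z / f z).re < (2 - α) / (1 - α) := by
  obtain ⟨w, -, -, hw_maps, hw_eq⟩ := hsub
  intro z hz hz0
  have hwz : ‖w z‖ < 1 := mem_ball_zero_iff.1 (hw_maps z hz)
  apply bounds_of_abs_sub_one_lt hα1
  calc |(z * deriv f z / f z).re - 1|
      = |(z * deriv f z / f z - 1).re| := by simp
    _ ≤ ‖z * deriv f z / f z - 1‖ := abs_re_le_norm _
    _ < 1 / (1 - α) := by
      rw [hw_eq z hz hz0]
      exact norm_div_one_sub_mul_sq_lt_s17 hα0 hα1 hwz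

theorem BS_re_bounds (α : ℝ) (hα0 : 0 ≤ α) (hα1 : α < 1)
    (f : ℂ → ℂ) (hf : DifferentiableOn ℂ f (ball (0:ℂ) 1))
    (hf0 : f 0 = 0) (hf'0 : deriv f 0 = 1)
    (hfne : ∀ z ∈ ball (0:ℂ) 1, z ≠ 0 → f z ≠ 0)
    (hsub : ∃ w : ℂ → ℂ, DifferentiableOn ℂ w (ball (0:ℂ) 1) ∧ w 0 = 0 ∧
      (∀ z ∈ ball (0:ℂ) 1, w z ∈ ball (0:ℂ) 1) ∧
      ∀ z ∈ ball (0:ℂ) 1, z ≠ 0 →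
        z * deriv f z / f z - 1 = w z / (1 - (α : ℂ) * (w z) ^ 2)) :
    ∀ z ∈ ball (0:ℂ) 1, z ≠ 0 →
      α / (α - 1) < (z * deriv f z / f z).re ∧
      (z * deriv f z / f z).re < (2 - α) / (1 - α) :=
  BS_re_bounds_general α hα0 hα1 f hsub
end

section
/- For 0 ≤ α < 1, the image of the unit circle under z ↦ Re(z/(1-αz²)), Im(z/(1-αz²)) lies on the curve (x²+y²)² = x²/(1-α)² + y²/(1+α)² (Booth lemniscate of elliptic type): for every φ, the point (x,y) = (Re F_α(e^{iφ}), Im F_α(e^{iφ})) satisfies (x²+y²)² - x²/(1-α)² - y²/(1+α)² = 0. -/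
/-!
Write `z = e^{iφ}`. Since `z⁻¹ = z̄` on the unit circle, `1 / F_α(z) = z̄ - α z` has real part
`(1 - α) cos φ` and imaginary part `-(1 + α) sin φ`: it runs over the ellipse with semi-axes
`1 - α` and `1 + α`. The Booth lemniscate is the image of that ellipse under `u ↦ 1 / u`.
-/

open Complex Real ComplexConjugate

theorem Complex.inv_div_one_sub_mul_sq {z : ℂ} (hz : ‖z‖ = 1) (α : ℂ) :
    (z / (1 - α * z ^ 2))⁻¹ = conj z - α * z := by
  have hz0 : z ≠ 0 := norm_ne_zero_iff.mp (by rw [hz]; exact one_ne_zero)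
  have hconj : conj z = z⁻¹ := by
    rw [Complex.inv_def, Complex.normSq_eq_norm_sq, hz]
    simp
  rw [inv_div, hconj]
  field_simp

theorem Complex.booth_lemniscate_inv_of_ellipse {u : ℂ} {a b : ℝ} (ha : a ≠ 0) (hb : b ≠ 0)
    (hu : (u.re / a) ^ 2 + (u.im / b) ^ 2 = 1) :
    ((u⁻¹).re ^ 2 + (u⁻¹).im ^ 2) ^ 2 - (u⁻¹).re ^ 2 / a ^ 2 - (u⁻¹).im ^ 2 / b ^ 2 = 0 := by
  have hu0 : u ≠ 0 := by
    rintro rfl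
    simp at hu
  have hN : u.re ^ 2 + u.im ^ 2 ≠ 0 := by
    rw [sq, sq, ← normSq_apply]
    exact (normSq_pos.mpr hu0).ne'
  rw [inv_re, inv_im, normSq_apply, ← sq, ← sq]
  field_simp at hu ⊢
  linear_combination -hu

theorem Complex.conj_sub_mul_mem_ellipse {z : ℂ} (hz : ‖z‖ = 1) {α : ℝ} (h1 : 1 - α ≠ 0)
    (h2 : 1 + α ≠ 0) :
    ((conj z - α * z).re / (1 - α)) ^ 2 + ((conj z - α * z).im / (1 + α)) ^ 2 = 1 := by
  have hsq : z.re ^ 2 + z.im ^ 2 = 1 := by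
    have hnormSq := Complex.normSq_eq_norm_sq z
    rw [hz, Complex.normSq_apply] at hnormSq
    linarith
  simp only [sub_re, sub_im, conj_re, conj_im, mul_re, mul_im, ofReal_re, ofReal_im]
  field_simp
  linear_combination (1 - α) ^ 2 * (1 + α) ^ 2 * hsq

theorem booth_lemniscate (α : ℝ) (hα0 : 0 ≤ α) (hα1 : α < 1) (φ : ℝ)
    (x y : ℝ)
    (hx : x = (Complex.exp (φ * Complex.I) /
      (1 - (α : ℂ) * Complex.exp (φ * Complex.I) ^ 2)).re)
    (hy : y = (Complex.exp (φ * Complex.I) /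
      (1 - (α : ℂ) * Complex.exp (φ * Complex.I) ^ 2)).im) :
    (x ^ 2 + y ^ 2) ^ 2 - x ^ 2 / (1 - α) ^ 2 - y ^ 2 / (1 + α) ^ 2 = 0 := by
  set z := Complex.exp (φ * Complex.I)
  have hz : ‖z‖ = 1 := Complex.norm_exp_ofReal_mul_I φ
  have hellipse := Complex.conj_sub_mul_mem_ellipse hz (α := α) (by linarith) (by linarith)
  rw [← Complex.inv_div_one_sub_mul_sq hz] at hellipse
  have hbooth := Complex.booth_lemniscate_inv_of_ellipse (by linarith) (by linarith) hellipse
  rwa [inv_inv, ← hx, ← hy] at hbooth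
end
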